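/- Let μ be a locally finite Borel measure on ℝⁿ with n ≥ 2, let 1 < q ≤ n/(n-1), and set α = n − q(n−1). If g ≥ 0 satisfies ‖g‖_{L^{q',∞}(μ)} = 1 (where 1/q + 1/q' = 1), and ν is the measure dν = g dμ, then for every x ∈ ℝⁿ, M₁ν(x) ≤ c_n · (M_α μ(x))^{1/q}, where c_n depends only on n. -/

import Mathlib

/-!
Write `q' = q/(q-1)`. The normalisation says `μ {g > t} ≤ t^(-q')`, so the layer-cake
formula, cut at height `T`, gives `∫_E g dμ ≤ T μ(E) + T^(1-q')/(q'-1)`; the choice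
`T = μ(E)^(-1/q')` turns this into `∫_E g dμ ≤ q μ(E)^(1/q)`. On a ball of radius `r`, whose
volume is `κ rⁿ`, the exponent `α = n - q(n-1)` is exactly the one for which
`r μ(B)^(1/q) / (κ rⁿ) = κ^(1/q-1) (r^α μ(B) / (κ rⁿ))^(1/q)`, so `c = q κ^(1/q-1)`
works.
-/

open MeasureTheory
open scoped ENNReal

/-- The fractional maximal function `M_α μ(x) = sup_{r>0} r^α μ(B_r(x))/|B_r(x)|`. -/
noncomputable def fracMax (n : ℕ) (α : ℝ) (μ : Measure (EuclideanSpace ℝ (Fin n)))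
    (x : EuclideanSpace ℝ (Fin n)) : ℝ≥0∞ :=
  ⨆ (r : ℝ) (_ : 0 < r),
    ENNReal.ofReal (r ^ α) * μ (Metric.ball x r) / volume (Metric.ball x r)

open Metric Set Filter

section WeakType

variable {X : Type*} [MeasurableSpace X] {μ : Measure X} {g : X → ℝ≥0∞}

theorem measure_lt_le_rpow_neg_of_iSup_le_one {p : ℝ} (hp : 0 < p)
    (h : (⨆ (t : ℝ) (_ : 0 < t),
      ENNReal.ofReal t * μ {x | ENNReal.ofReal t < g x} ^ (1 / p)) ≤ 1)
    {t : ℝ} (ht : 0 < t) : μ {x | ENNReal.ofReal t < g x} ≤ ENNReal.ofReal (t ^ (-p)) := by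
  have h₁ := (le_iSup₂ (f := fun t (_ : 0 < t) =>
    ENNReal.ofReal t * μ {x | ENNReal.ofReal t < g x} ^ (1 / p)) t ht).trans h
  rwa [mul_comm, ← ENNReal.le_inv_iff_mul_le, one_div, ENNReal.rpow_inv_le_iff hp,
    ← ENNReal.ofReal_inv_of_pos ht, ENNReal.ofReal_rpow_of_pos (inv_pos.2 ht),
    Real.inv_rpow ht.le, ← Real.rpow_neg ht.le] at h₁

theorem ae_lt_top_of_measure_lt_le_rpow_neg {p : ℝ} (hp : 0 < p)
    (hweak : ∀ t : ℝ, 0 < t → μ {x | ENNReal.ofReal t < g x} ≤ ENNReal.ofReal (t ^ (-p))) :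
    ∀ᵐ x ∂μ, g x < ⊤ := by
  have h_tendsto : Tendsto (fun t : ℝ => ENNReal.ofReal (t ^ (-p))) atTop (nhds 0) := by
    simpa using ENNReal.tendsto_ofReal (tendsto_rpow_neg_atTop hp)
  refine ae_iff.2 (le_antisymm (ge_of_tendsto h_tendsto ?_) bot_le)
  filter_upwards [eventually_gt_atTop 0] with t ht
  refine (measure_mono fun x hx => ?_).trans (hweak t ht)
  simp_all

theorem setLIntegral_le_of_measure_lt_le {p : ℝ} (hp : 1 < p)
    (hweak : ∀ t : ℝ, 0 < t → μ {x | ENNReal.ofReal t < g x} ≤ ENNReal.ofReal (t ^ (-p)))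
    (hg : Measurable g) (E : Set X) {T : ℝ} (hT : 0 < T) :
    ∫⁻ x in E, g x ∂μ ≤
      ENNReal.ofReal T * μ E + ENNReal.ofReal (T ^ (1 - p) / (p - 1)) := by
  have h_layercake :
      ∫⁻ x in E, g x ∂μ = ∫⁻ t in Ioi 0, μ.restrict E {x | t < (g x).toReal} := by
    rw [← lintegral_eq_lintegral_meas_lt _ (ae_of_all _ fun _ => ENNReal.toReal_nonneg)
      hg.ennreal_toReal.aemeasurable]
    refine lintegral_congr_ae ((ae_restrict_of_ae (ae_lt_top_of_measure_lt_le_rpow_neg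
      (by linarith) hweak)).mono fun x hx => (ENNReal.ofReal_toReal hx.ne).symm)
  have h_tail :
      ∀ t ∈ Ioi T, μ.restrict E {x | t < (g x).toReal} ≤ ENNReal.ofReal (t ^ (-p)) := by
    intro t ht
    refine (Measure.restrict_le_self _).trans ((measure_mono fun x hx => ?_).trans
      (hweak t (hT.trans ht)))
    exact ((ENNReal.ofReal_lt_ofReal_iff ((hT.trans ht).trans hx)).2 hx).trans_le
      ENNReal.ofReal_toReal_le
  have h_tail_integral : ∫⁻ t in Ioi T, ENNReal.ofReal (t ^ (-p)) =
      ENNReal.ofReal (T ^ (1 - p) / (p - 1)) := by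
    rw [← ofReal_integral_eq_lintegral_ofReal (integrableOn_Ioi_rpow_of_lt (by linarith) hT)
      ((ae_restrict_mem measurableSet_Ioi).mono fun t ht => Real.rpow_nonneg (hT.trans ht).le _),
      integral_Ioi_rpow_of_lt (by linarith) hT]
    congr 1
    rw [show -p + 1 = 1 - p by ring, neg_div, ← div_neg, neg_sub]
  calc ∫⁻ x in E, g x ∂μ
      = (∫⁻ t in Ioc 0 T, μ.restrict E {x | t < (g x).toReal}) +
          ∫⁻ t in Ioi T, μ.restrict E {x | t < (g x).toReal} := by
        rw [h_layercake, ← Ioc_union_Ioi_eq_Ioi hT.le,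
          lintegral_union measurableSet_Ioi Ioc_disjoint_Ioi_same]
    _ ≤ (∫⁻ _ in Ioc 0 T, μ E) + ∫⁻ t in Ioi T, ENNReal.ofReal (t ^ (-p)) := by
        refine add_le_add (setLIntegral_mono' measurableSet_Ioc fun t _ => ?_)
          (setLIntegral_mono' measurableSet_Ioi h_tail)
        exact (measure_mono (subset_univ _)).trans_eq (Measure.restrict_apply_univ E)
    _ = ENNReal.ofReal T * μ E + ENNReal.ofReal (T ^ (1 - p) / (p - 1)) := by
        rw [setLIntegral_const, Real.volume_Ioc, sub_zero, mul_comm, h_tail_integral]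

theorem setLIntegral_le_rpow_of_measure_lt_le {q : ℝ} (hq : 1 < q)
    (hweak : ∀ t : ℝ, 0 < t →
      μ {x | ENNReal.ofReal t < g x} ≤ ENNReal.ofReal (t ^ (-(q / (q - 1)))))
    (hg : Measurable g) (E : Set X) :
    ∫⁻ x in E, g x ∂μ ≤ ENNReal.ofReal q * μ E ^ (1 / q) := by
  have hq₀ : 0 < q - 1 := by linarith
  have hp : 1 < q / (q - 1) := by rw [one_lt_div hq₀]; linarith
  rcases eq_or_ne (μ E) ⊤ with hE | hE
  · rw [hE, ENNReal.top_rpow_of_pos (by positivity),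
      ENNReal.mul_top (ENNReal.ofReal_pos.2 (by linarith)).ne']
    exact le_top
  rcases eq_or_ne (μ E) 0 with hE₀ | hE₀
  · simp [setLIntegral_measure_zero _ _ hE₀]
  set m := (μ E).toReal
  have hm : 0 < m := ENNReal.toReal_pos hE₀ hE
  refine (setLIntegral_le_of_measure_lt_le hp hweak hg E (T := m ^ (1 / q - 1))
    (by positivity)).trans_eq ?_
  rw [← ENNReal.ofReal_toReal hE, ← ENNReal.ofReal_mul (by positivity),
    ← ENNReal.ofReal_add (by positivity) (by positivity),
    ENNReal.ofReal_rpow_of_nonneg hm.le (by positivity), ← ENNReal.ofReal_mul (by linarith)]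
  congr 1
  rw [← Real.rpow_mul hm.le, Real.rpow_sub_one hm.ne',
    show (1 / q - 1) * (1 - q / (q - 1)) = 1 / q by field_simp; ring]
  field_simp
  ring

end WeakType

theorem ofReal_mul_rpow_div_eq (n : ℕ) {q r : ℝ} (hq : 0 < q) (hr : 0 < r) {K M : ℝ≥0∞}
    (hK₀ : K ≠ 0) (hK : K ≠ ⊤) (hM : M ≠ ⊤) :
    ENNReal.ofReal r * M ^ (1 / q) / (ENNReal.ofReal (r ^ n) * K) =
      K ^ (1 / q - 1) *
        (ENNReal.ofReal (r ^ ((n : ℝ) - q * (n - 1))) * M / (ENNReal.ofReal (r ^ n) * K)) ^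
          (1 / q) := by
  have hk : 0 < K.toReal := ENNReal.toReal_pos hK₀ hK
  have hm : 0 ≤ M.toReal := ENNReal.toReal_nonneg
  rw [← ENNReal.ofReal_toReal hK, ← ENNReal.ofReal_toReal hM,
    ENNReal.ofReal_rpow_of_nonneg hm (by positivity), ← ENNReal.ofReal_mul hr.le,
    ← ENNReal.ofReal_mul (by positivity), ← ENNReal.ofReal_mul (by positivity),
    ← ENNReal.ofReal_div_of_pos (by positivity), ← ENNReal.ofReal_div_of_pos (by positivity),
    ENNReal.ofReal_rpow_of_pos hk, ENNReal.ofReal_rpow_of_nonneg (by positivity) (by positivity),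
    ← ENNReal.ofReal_mul (by positivity)]
  congr 1
  rw [Real.div_rpow (by positivity) (by positivity), Real.mul_rpow (by positivity) hm,
    Real.mul_rpow (by positivity) hk.le, ← Real.rpow_mul hr.le, ← Real.rpow_natCast,
    ← Real.rpow_mul hr.le, Real.rpow_sub_one hk.ne',
    show ((n : ℝ) - q * (n - 1)) * (1 / q) = n * (1 / q) + (1 - n) by field_simp; ring,
    Real.rpow_add hr, Real.rpow_sub hr, Real.rpow_one]
  field_simp

theorem le_fracMax (n : ℕ) (α : ℝ) (μ : Measure (EuclideanSpace ℝ (Fin n)))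
    (x : EuclideanSpace ℝ (Fin n)) {r : ℝ} (hr : 0 < r) :
    ENNReal.ofReal (r ^ α) * μ (ball x r) / volume (ball x r) ≤ fracMax n α μ x :=
  le_iSup₂ (f := fun r (_ : 0 < r) =>
    ENNReal.ofReal (r ^ α) * μ (ball x r) / volume (ball x r)) r hr

theorem fracMax_one_withDensity_le (n : ℕ) (q : ℝ) (hq : 1 < q) :
    ∃ c : ℝ≥0∞, 0 < c ∧ c ≠ ⊤ ∧
      ∀ (μ : Measure (EuclideanSpace ℝ (Fin n))) [IsLocallyFiniteMeasure μ]
        (g : EuclideanSpace ℝ (Fin n) → ℝ≥0∞), Measurable g →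
        (⨆ (t : ℝ) (_ : 0 < t),
            ENNReal.ofReal t *
              (μ {x | ENNReal.ofReal t < g x}) ^ (1 / (q / (q - 1))) ) = 1 →
        ∀ x : EuclideanSpace ℝ (Fin n),
          fracMax n 1 (μ.withDensity g) x ≤
            c * (fracMax n ((n : ℝ) - q * ((n : ℝ) - 1)) μ x) ^ (1 / q) := by
  set κ := volume (ball (0 : EuclideanSpace ℝ (Fin n)) 1)
  have hκ₀ : κ ≠ 0 := (measure_ball_pos volume 0 one_pos).ne'
  have hκ : κ ≠ ⊤ := measure_ball_lt_top.ne
  refine ⟨ENNReal.ofReal q * κ ^ (1 / q - 1),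
    ENNReal.mul_pos (ENNReal.ofReal_pos.2 (by linarith)).ne'
      (ENNReal.rpow_pos (pos_iff_ne_zero.2 hκ₀) hκ).ne',
    ENNReal.mul_ne_top ENNReal.ofReal_ne_top (ENNReal.rpow_ne_top_of_ne_zero hκ₀ hκ), ?_⟩
  intro μ _ g hg hnorm x
  have hweak := fun t (ht : 0 < t) =>
    measure_lt_le_rpow_neg_of_iSup_le_one (by positivity) hnorm.le ht
  refine iSup₂_le fun r hr => ?_
  have hvol : volume (ball x r) = ENNReal.ofReal (r ^ n) * κ := by
    rw [Measure.addHaar_ball_of_pos _ _ hr, finrank_euclideanSpace_fin]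
  calc ENNReal.ofReal (r ^ (1 : ℝ)) * μ.withDensity g (ball x r) / volume (ball x r)
      ≤ ENNReal.ofReal r * (ENNReal.ofReal q * μ (ball x r) ^ (1 / q)) / volume (ball x r) := by
        rw [Real.rpow_one, withDensity_apply _ measurableSet_ball]
        gcongr
        exact setLIntegral_le_rpow_of_measure_lt_le hq hweak hg _
    _ = ENNReal.ofReal q * κ ^ (1 / q - 1) *
          (ENNReal.ofReal (r ^ ((n : ℝ) - q * ((n : ℝ) - 1))) * μ (ball x r) /
            volume (ball x r)) ^ (1 / q) := by
        rw [hvol, mul_left_comm, mul_div_assoc, mul_assoc,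
          ofReal_mul_rpow_div_eq n (by linarith) hr hκ₀ hκ measure_ball_lt_top.ne]
    _ ≤ ENNReal.ofReal q * κ ^ (1 / q - 1) *
          (fracMax n ((n : ℝ) - q * ((n : ℝ) - 1)) μ x) ^ (1 / q) := by
        gcongr
        exact le_fracMax n _ μ x hr
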